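/- arXiv:math/0306209 — 2 statements merged into one kernel-verified Lean document; each statement's English description precedes it below -/
import Mathlib

section
/- Let V be a finite-dimensional abelian complex Lie algebra, M a V-module, and a ∈ V such that the map m ↦ a·m is surjective from M onto M. Set N := {m ∈ M : a·m = 0}, a V-submodule of M. Then for every i ≥ 1, every i-cocycle f : V^i → M is cohomologous to a cocycle with values in N: there exist an i-cocycle g : V^i → M with g(v_1, …, v_i) ∈ N for all v_1, …, v_i ∈ V, and an (i−1)-cochain c : V^{i−1} → M, such that f = g + ∂c. -/
/-- The Chevalley–Eilenberg differential for a finite-dimensional abelian complex Lie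
algebra `V` acting on `M` via `act`:
`(∂f)(v₁, …, v_{i+1}) = Σ_j (−1)ʲ vⱼ · f(v₁, …, v̂ⱼ, …, v_{i+1})`. -/
noncomputable def lieDiff {V M : Type*} [AddCommGroup V] [Module ℂ V]
    [AddCommGroup M] [Module ℂ M] (act : V →ₗ[ℂ] M →ₗ[ℂ] M) {i : ℕ}
    (f : (Fin i → V) → M) : (Fin (i + 1) → V) → M :=
  fun v => ∑ j : Fin (i + 1), ((-1 : ℂ) ^ ((j : ℕ) + 1)) • act (v j) (f (v ∘ j.succAbove))


namespace CE


lemma neg_one_pow_succ_add {m n : ℕ} (h : n = m + 1) : (-1:ℂ)^m + (-1:ℂ)^n = 0 := by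
  rw [h, pow_succ]; ring

lemma range_comp_succAbove {n : ℕ} (j : Fin (n+2)) (k : Fin (n+1)) :
    Set.range (j.succAbove ∘ k.succAbove) = ({j, j.succAbove k} : Set (Fin (n+2)))ᶜ := by
  ext x
  simp only [Set.range_comp, Fin.range_succAbove, Set.mem_image, Set.mem_compl_iff,
    Set.mem_insert_iff, Set.mem_singleton_iff, not_or, Set.mem_compl_iff]
  constructor
  · rintro ⟨y, hy, rfl⟩
    exact ⟨Fin.succAbove_ne _ _, fun h => hy (Fin.succAbove_right_injective h)⟩
  · rintro ⟨hxj, hxq⟩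
    obtain ⟨y, rfl⟩ := Fin.exists_succAbove_eq hxj
    exact ⟨y, fun h => hxq (by rw [h]), rfl⟩

lemma succAbove_comp_symm {n : ℕ} {j q : Fin (n+2)} {k k' : Fin (n+1)}
    (h1 : j.succAbove k = q) (h2 : q.succAbove k' = j) :
    j.succAbove ∘ k.succAbove = q.succAbove ∘ k'.succAbove := by
  have hm1 : StrictMono (j.succAbove ∘ k.succAbove) :=
    (Fin.strictMono_succAbove j).comp (Fin.strictMono_succAbove k)
  have hm2 : StrictMono (q.succAbove ∘ k'.succAbove) :=
    (Fin.strictMono_succAbove q).comp (Fin.strictMono_succAbove k')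
  haveI : WellFoundedLT (Fin n) := inferInstance
  refine (hm1.range_inj hm2).mp ?_
  rw [range_comp_succAbove, range_comp_succAbove, h1, h2, Set.pair_comm]

lemma sign_partner {n : ℕ} {j q : Fin (n+2)} {k k' : Fin (n+1)}
    (h1 : j.succAbove k = q) (h2 : q.succAbove k' = j) :
    (-1:ℂ)^((j:ℕ)+(k:ℕ)) + (-1:ℂ)^((q:ℕ)+(k':ℕ)) = 0 := by
  rcases lt_or_ge (Fin.castSucc k) j with h | h
  · have hq : (q:ℕ) = (k:ℕ) := by
      rw [← h1, Fin.succAbove_of_castSucc_lt _ _ h]; rfl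
    have hqj : (q:ℕ) < (j:ℕ) := by
      have := Fin.lt_def.mp h; simp only [Fin.coe_castSucc] at this; omega
    have hj : (j:ℕ) = (k':ℕ) + 1 := by
      rcases lt_or_ge (Fin.castSucc k') q with h' | h'
      · exfalso
        have h3 := congrArg Fin.val (Fin.succAbove_of_castSucc_lt _ _ h')
        rw [h2] at h3
        have h4 := Fin.lt_def.mp h'
        simp only [Fin.coe_castSucc] at h3 h4
        omega
      · have h3 := congrArg Fin.val (Fin.succAbove_of_le_castSucc _ _ h')
        rw [h2] at h3
        simp only [Fin.val_succ] at h3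
        omega
    rw [add_comm]
    exact neg_one_pow_succ_add (by omega)
  · have hq : (q:ℕ) = (k:ℕ) + 1 := by
      rw [← h1, Fin.succAbove_of_le_castSucc _ _ h]; rfl
    have hjq : (j:ℕ) ≤ (k:ℕ) := by
      have := Fin.le_def.mp h; simp only [Fin.coe_castSucc] at this; omega
    have hj : (j:ℕ) = (k':ℕ) := by
      rcases lt_or_ge (Fin.castSucc k') q with h' | h'
      · have h3 := congrArg Fin.val (Fin.succAbove_of_castSucc_lt _ _ h')
        rw [h2] at h3
        simp only [Fin.coe_castSucc] at h3
        omega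
      · exfalso
        have h3 := congrArg Fin.val (Fin.succAbove_of_le_castSucc _ _ h')
        rw [h2] at h3
        have h4 := Fin.le_def.mp h'
        simp only [Fin.val_succ, Fin.coe_castSucc] at h3 h4
        omega
    exact neg_one_pow_succ_add (by omega)



variable {V M : Type*} [AddCommGroup V] [Module ℂ V] [AddCommGroup M] [Module ℂ M]

/-- The Chevalley–Eilenberg differential as a multilinear map. -/
noncomputable def lieDiffMulti (act : V →ₗ[ℂ] M →ₗ[ℂ] M) {i : ℕ}
    (c : MultilinearMap ℂ (fun _ : Fin i => V) M) :
    MultilinearMap ℂ (fun _ : Fin (i+1) => V) M where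
  toFun v := lieDiff act (⇑c) v
  map_update_add' := by
    intro dec v t x y
    simp only [lieDiff]
    rw [← Finset.sum_add_distrib]
    refine Finset.sum_congr rfl fun j _ => ?_
    rcases eq_or_ne t j with rfl | htj
    · have h1 : ∀ z : V, Function.update v t z ∘ t.succAbove = v ∘ t.succAbove := fun z =>
        Function.update_comp_eq_of_forall_ne _ _ fun x => Fin.succAbove_ne t x
      simp only [h1, Function.update_self, map_add, LinearMap.add_apply, smul_add]
    · obtain ⟨t', rfl⟩ := Fin.exists_succAbove_eq htj
      have h2 : ∀ z : V, Function.update v (j.succAbove t') z ∘ j.succAbove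
          = Function.update (v ∘ j.succAbove) t' z := fun z =>
        Function.update_comp_eq_of_injective _ Fin.succAbove_right_injective _ _
      have h3 : ∀ z : V, Function.update v (j.succAbove t') z j = v j := fun z =>
        Function.update_of_ne (Fin.ne_succAbove j t') _ _
      simp only [h2, h3, c.map_update_add, map_add, smul_add]
  map_update_smul' := by
    intro dec v t r x
    simp only [lieDiff, Finset.smul_sum]
    refine Finset.sum_congr rfl fun j _ => ?_
    rcases eq_or_ne t j with rfl | htj
    · have h1 : ∀ z : V, Function.update v t z ∘ t.succAbove = v ∘ t.succAbove := fun z =>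
        Function.update_comp_eq_of_forall_ne _ _ fun x => Fin.succAbove_ne t x
      simp only [h1, Function.update_self, map_smul, LinearMap.smul_apply]
      rw [smul_comm]
    · obtain ⟨t', rfl⟩ := Fin.exists_succAbove_eq htj
      have h2 : ∀ z : V, Function.update v (j.succAbove t') z ∘ j.succAbove
          = Function.update (v ∘ j.succAbove) t' z := fun z =>
        Function.update_comp_eq_of_injective _ Fin.succAbove_right_injective _ _
      have h3 : ∀ z : V, Function.update v (j.succAbove t') z j = v j := fun z =>
        Function.update_of_ne (Fin.ne_succAbove j t') _ _
      simp only [h2, h3, c.map_update_smul, map_smul]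
      rw [smul_comm]

@[simp] lemma lieDiffMulti_apply (act : V →ₗ[ℂ] M →ₗ[ℂ] M) {i : ℕ}
    (c : MultilinearMap ℂ (fun _ : Fin i => V) M) (v : Fin (i+1) → V) :
    lieDiffMulti act c v = lieDiff act (⇑c) v := rfl





-- the two adjacent succAbove's agree away from the removed indices
lemma succAbove_castSucc_succ {n : ℕ} (k : Fin n) (t : Fin n) (ht : t ≠ k) :
    (Fin.castSucc k).succAbove t = (Fin.succ k).succAbove t := by
  have hval : (t:ℕ) ≠ (k:ℕ) := fun h => ht (Fin.ext h)
  rcases lt_or_gt_of_ne hval with h | h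
  · rw [Fin.succAbove_of_castSucc_lt _ _ (by rw [Fin.lt_def]; simpa using h),
      Fin.succAbove_of_castSucc_lt _ _ (by rw [Fin.lt_def]; simp; omega)]
  · rw [Fin.succAbove_of_le_castSucc _ _ (by rw [Fin.le_def]; simp; omega),
      Fin.succAbove_of_le_castSucc _ _ (by rw [Fin.le_def]; simp; omega)]

lemma succAbove_castSucc_self {n : ℕ} (k : Fin n) :
    (Fin.castSucc k).succAbove k = Fin.succ k :=
  Fin.succAbove_of_le_castSucc _ _ le_rfl

lemma succAbove_succ_self {n : ℕ} (k : Fin n) :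
    (Fin.succ k).succAbove k = Fin.castSucc k :=
  Fin.succAbove_of_castSucc_lt _ _ (Fin.castSucc_lt_succ : Fin.castSucc k < Fin.succ k)


/-- vanishing of the differential of an alternating cochain on tuples with equal
adjacent entries -/
lemma lieDiff_eq_zero_of_adj (act : V →ₗ[ℂ] M →ₗ[ℂ] M) {i : ℕ}
    (c : V [⋀^Fin i]→ₗ[ℂ] M) (v : Fin (i+1) → V) (k : Fin i)
    (h : v k.castSucc = v k.succ) : lieDiff act (⇑c) v = 0 := by
  classical
  have hcs : k.castSucc ≠ k.succ := (Fin.castSucc_lt_succ : Fin.castSucc k < Fin.succ k).ne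
  have hzero : ∀ j : Fin (i+1), j ≠ k.castSucc → j ≠ k.succ →
      c (v ∘ j.succAbove) = 0 := by
    intro j h1 h2
    obtain ⟨p, hp⟩ := Fin.exists_succAbove_eq h1.symm
    obtain ⟨q, hq⟩ := Fin.exists_succAbove_eq h2.symm
    refine c.map_eq_zero_of_eq _ (i := p) (j := q) ?_ ?_
    · simp only [Function.comp_apply, hp, hq, h]
    · intro hpq; rw [hpq, hq] at hp; exact hcs (hp ▸ rfl)
  have htup : v ∘ (Fin.castSucc k).succAbove = v ∘ (Fin.succ k).succAbove := by
    funext t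
    rcases eq_or_ne t k with rfl | ht
    · simp only [Function.comp_apply, succAbove_castSucc_self, succAbove_succ_self]
      exact h.symm
    · rw [Function.comp_apply, Function.comp_apply, succAbove_castSucc_succ k t ht]
  unfold lieDiff
  refine Finset.sum_ninvolution (Equiv.swap k.castSucc k.succ) ?_ ?_
    (fun _ => Finset.mem_univ _) (fun j => Equiv.swap_apply_self _ _ _)
  · intro j
    rcases eq_or_ne j k.castSucc with rfl | h1
    · rw [Equiv.swap_apply_left, htup, h, ← add_smul,
        neg_one_pow_succ_add (by simp [Fin.val_succ]), zero_smul]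
    rcases eq_or_ne j k.succ with rfl | h2
    · rw [Equiv.swap_apply_right, ← htup, ← h, ← add_smul, add_comm,
        neg_one_pow_succ_add (by simp [Fin.val_succ]), zero_smul]
    · rw [Equiv.swap_apply_of_ne_of_ne h1 h2, hzero j h1 h2]
      simp
  · intro j hj hswap
    rcases eq_or_ne j k.castSucc with rfl | h1
    · rw [Equiv.swap_apply_left] at hswap; exact hcs hswap.symm
    rcases eq_or_ne j k.succ with rfl | h2
    · rw [Equiv.swap_apply_right] at hswap; exact hcs hswap
    · exact hj (by rw [hzero j h1 h2]; simp)


lemma lieDiff_lieDiff (act : V →ₗ[ℂ] M →ₗ[ℂ] M)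
    (hcomm : ∀ (v w : V) (m : M), act v (act w m) = act w (act v m))
    {i : ℕ} (c : (Fin i → V) → M) :
    lieDiff act (lieDiff act c) = 0 := by
  classical
  funext v
  simp only [lieDiff, Pi.zero_apply, map_sum, map_smul, Finset.smul_sum, smul_smul,
    Function.comp_apply]
  have hsgn : ∀ (a b : ℕ), (-1:ℂ)^(a+1) * (-1:ℂ)^(b+1) = (-1:ℂ)^(a+b) := by
    intro a b
    rw [← pow_add, show a+1+(b+1) = (a+b)+2 from by omega, pow_add]
    norm_num
  simp only [hsgn]
  rw [← Finset.sum_product']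
  have hne : ∀ (j : Fin (i+2)) (k : Fin (i+1)), j ≠ j.succAbove k :=
    fun j k => Fin.ne_succAbove j k
  obtain ⟨pt, hpt⟩ : ∃ pt : Fin (i+2) → Fin (i+1) → Fin (i+1),
      ∀ j k, (j.succAbove k).succAbove (pt j k) = j :=
    ⟨fun j k => Classical.choose (Fin.exists_succAbove_eq (hne j k)),
     fun j k => Classical.choose_spec (Fin.exists_succAbove_eq (hne j k))⟩
  refine Finset.sum_ninvolution (fun p => (p.1.succAbove p.2, pt p.1 p.2)) ?_ ?_
    (fun _ => by simp) ?_
  · rintro ⟨j, k⟩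
    dsimp only
    have h2 := hpt j k
    rw [h2]
    have hc : (v ∘ (j.succAbove k).succAbove) ∘ (pt j k).succAbove
        = (v ∘ j.succAbove) ∘ k.succAbove := by
      rw [Function.comp_assoc, Function.comp_assoc, succAbove_comp_symm rfl h2]
    rw [hc, hcomm (v (j.succAbove k)) (v j)]
    rw [← add_smul, sign_partner rfl h2, zero_smul]
  · rintro ⟨j, k⟩ _ hgp
    exact hne j k (congrArg Prod.fst hgp).symm
  · rintro ⟨j, k⟩
    dsimp only
    have h2 := hpt j k
    refine Prod.ext h2 ?_
    dsimp only
    apply Fin.succAbove_right_injective (p := j)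
    rw [show j.succAbove (pt (j.succAbove k) (pt j k)) =
      ((j.succAbove k).succAbove (pt j k)).succAbove (pt (j.succAbove k) (pt j k)) from by rw [h2]]
    rw [hpt]


/-- antisymmetry of the differential under an adjacent swap -/
lemma lieDiff_swap_adj (act : V →ₗ[ℂ] M →ₗ[ℂ] M) {i : ℕ}
    (c : V [⋀^Fin i]→ₗ[ℂ] M) (v : Fin (i+1) → V) (k : Fin i) :
    lieDiff act (⇑c) (Function.update (Function.update v k.castSucc (v k.succ))
      k.succ (v k.castSucc)) = - lieDiff act (⇑c) v := by
  classical
  have hcs : k.castSucc ≠ k.succ := (Fin.castSucc_lt_succ : Fin.castSucc k < Fin.succ k).ne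
  have hadj : ∀ w : Fin (i+1) → V, w k.castSucc = w k.succ →
      lieDiffMulti act c.toMultilinearMap w = 0 := fun w hw =>
    lieDiff_eq_zero_of_adj act c w k hw
  have e1 : lieDiffMulti act c.toMultilinearMap
      (Function.update (Function.update v k.castSucc (v k.castSucc + v k.succ)) k.succ
        (v k.castSucc + v k.succ)) = 0 :=
    hadj _ (by rw [Function.update_of_ne hcs, Function.update_self, Function.update_self])
  rw [(lieDiffMulti act c.toMultilinearMap).map_update_add, Function.update_comm hcs,
    Function.update_comm hcs, (lieDiffMulti act c.toMultilinearMap).map_update_add,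
    (lieDiffMulti act c.toMultilinearMap).map_update_add] at e1
  have z1 : lieDiffMulti act c.toMultilinearMap
      (Function.update (Function.update v k.succ (v k.castSucc)) k.castSucc (v k.castSucc)) = 0 :=
    hadj _ (by rw [Function.update_self, Function.update_of_ne hcs.symm, Function.update_self])
  have z4 : lieDiffMulti act c.toMultilinearMap
      (Function.update (Function.update v k.succ (v k.succ)) k.castSucc (v k.succ)) = 0 :=
    hadj _ (by rw [Function.update_self, Function.update_of_ne hcs.symm, Function.update_self])
  have h3 : Function.update (Function.update v k.succ (v k.succ)) k.castSucc (v k.castSucc)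
      = v := by rw [Function.update_eq_self, Function.update_eq_self]
  rw [z1, zero_add, h3, z4, add_zero] at e1
  have hg : Function.update (Function.update v k.castSucc (v k.succ)) k.succ (v k.castSucc)
      = Function.update (Function.update v k.succ (v k.castSucc)) k.castSucc (v k.succ) :=
    Function.update_comm hcs _ _ v
  show lieDiffMulti act c.toMultilinearMap _ = - lieDiffMulti act c.toMultilinearMap v
  rw [hg]
  exact eq_neg_of_add_eq_zero_left e1

lemma lieDiff_alternating (act : V →ₗ[ℂ] M →ₗ[ℂ] M) {i : ℕ}
    (c : V [⋀^Fin i]→ₗ[ℂ] M) (v : Fin (i+1) → V) (p q : Fin (i+1))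
    (hv : v p = v q) (hpq : p ≠ q) : lieDiff act (⇑c) v = 0 := by
  classical
  suffices key : ∀ d : ℕ, ∀ (v : Fin (i+1) → V) (p q : Fin (i+1)),
      (q:ℕ) = (p:ℕ) + d + 1 → v p = v q → lieDiff act (⇑c) v = 0 by
    rcases Ne.lt_or_gt hpq with h | h
    · exact key ((q:ℕ) - (p:ℕ) - 1) v p q (by have := Fin.lt_def.mp h; omega) hv
    · exact key ((p:ℕ) - (q:ℕ) - 1) v q p (by have := Fin.lt_def.mp h; omega) hv.symm
  intro d
  induction d with
  | zero =>
    intro v p q hq hv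
    have hp : (p:ℕ) < i := by have := q.isLt; omega
    have h1 : (⟨(p:ℕ), hp⟩ : Fin i).castSucc = p := Fin.ext rfl
    have h2 : (⟨(p:ℕ), hp⟩ : Fin i).succ = q := Fin.ext (by simp [Fin.val_succ]; omega)
    refine lieDiff_eq_zero_of_adj act c v ⟨(p:ℕ), hp⟩ ?_
    rw [h1, h2]; exact hv
  | succ d ih =>
    intro v p q hq hv
    have hk : (q:ℕ) - 1 < i := by have := q.isLt; omega
    set k : Fin i := ⟨(q:ℕ)-1, hk⟩ with hkdef
    have hcsval : (k.castSucc : ℕ) = (q:ℕ) - 1 := rfl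
    have hscval : (k.succ : ℕ) = (q:ℕ) := by simp [Fin.val_succ, hkdef]; omega
    have hsc : k.succ = q := Fin.ext hscval
    have hcs : k.castSucc ≠ k.succ := (Fin.castSucc_lt_succ : Fin.castSucc k < Fin.succ k).ne
    have hp1 : p ≠ k.castSucc := by
      intro h; apply_fun Fin.val at h; rw [hcsval] at h; omega
    have hp2 : p ≠ k.succ := by
      intro h; apply_fun Fin.val at h; rw [hscval] at h; omega
    set w := Function.update (Function.update v k.castSucc (v k.succ)) k.succ (v k.castSucc)
      with hw
    have hwp : w p = v p := by
      rw [hw, Function.update_of_ne hp2, Function.update_of_ne hp1]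
    have hwc : w k.castSucc = v k.succ := by
      rw [hw, Function.update_of_ne hcs, Function.update_self]
    have hw0 : lieDiff act (⇑c) w = 0 := by
      refine ih w p k.castSucc (by rw [hcsval]; omega) ?_
      rw [hwp, hwc, hsc]; exact hv
    have hswap := lieDiff_swap_adj act c v k
    rw [← hw, hw0] at hswap
    exact neg_eq_zero.mp hswap.symm

/-- The Chevalley–Eilenberg differential as an alternating map. -/
noncomputable def lieDiffAlt (act : V →ₗ[ℂ] M →ₗ[ℂ] M) {i : ℕ}
    (c : V [⋀^Fin i]→ₗ[ℂ] M) : V [⋀^Fin (i+1)]→ₗ[ℂ] M :=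
  { lieDiffMulti act c.toMultilinearMap with
    map_eq_zero_of_eq' := fun v p q hv hpq => lieDiff_alternating act c v p q hv hpq }

@[simp] lemma lieDiffAlt_apply (act : V →ₗ[ℂ] M →ₗ[ℂ] M) {i : ℕ}
    (c : V [⋀^Fin i]→ₗ[ℂ] M) (v : Fin (i+1) → V) :
    lieDiffAlt act c v = lieDiff act (⇑c) v := rfl

lemma lieDiff_sub (act : V →ₗ[ℂ] M →ₗ[ℂ] M) {i : ℕ} (f₁ f₂ : (Fin i → V) → M) :
    lieDiff act (f₁ - f₂) = lieDiff act f₁ - lieDiff act f₂ := by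
  funext v
  simp only [lieDiff, Pi.sub_apply, map_sub, smul_sub, Finset.sum_sub_distrib]

end CE

/-- let `V` be a finite-dimensional abelian complex Lie algebra acting on `M`
(a bilinear action with commuting operators), and `a ∈ V` with `m ↦ a·m` surjective.
Set `N := {m ∈ M : a·m = 0}`.  Then every alternating `(i+1)`-cocycle `f` (`i + 1 ≥ 1`)
is cohomologous to a cocycle `g` with values in `N`: `f = g + ∂c` for some `i`-cochain `c`. -/
theorem cocycle_cohomologous_to_kernel_valued {V M : Type*} [AddCommGroup V] [Module ℂ V]
    [FiniteDimensional ℂ V] [AddCommGroup M] [Module ℂ M]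
    (act : V →ₗ[ℂ] M →ₗ[ℂ] M)
    (hcomm : ∀ (v w : V) (m : M), act v (act w m) = act w (act v m))
    (a : V) (hsurj : Function.Surjective (act a))
    (i : ℕ) (f : V [⋀^Fin (i + 1)]→ₗ[ℂ] M) (hf : lieDiff act ⇑f = 0) :
    ∃ (g : V [⋀^Fin (i + 1)]→ₗ[ℂ] M) (c : V [⋀^Fin i]→ₗ[ℂ] M),
      lieDiff act ⇑g = 0 ∧
      (∀ v : Fin (i + 1) → V, g v ∈ LinearMap.ker (act a)) ∧
      ∀ v : Fin (i + 1) → V, f v = g v + lieDiff act ⇑c v := by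
  classical
  obtain ⟨s, hs⟩ := (act a).exists_rightInverse_of_surjective (LinearMap.range_eq_top.2 hsurj)
  have hsa : ∀ m : M, act a (s m) = m := fun m => by
    have := LinearMap.ext_iff.mp hs m
    simpa using this
  set c : V [⋀^Fin i]→ₗ[ℂ] M := -(s.compAlternatingMap (f.curryLeft a)) with hc
  have hcw : ∀ w : Fin i → V, act a (c w) = -(f (Fin.cons a w)) := by
    intro w
    rw [hc]
    simp only [AlternatingMap.neg_apply, LinearMap.compAlternatingMap_apply, map_neg,
      AlternatingMap.curryLeft_apply_apply, hsa]
    rfl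
  set D : V [⋀^Fin (i+1)]→ₗ[ℂ] M := CE.lieDiffAlt act c with hDdef
  have hDapp : ∀ v : Fin (i+1) → V, D v = lieDiff act (⇑c) v := fun v => rfl
  have hDcoe : ⇑D = lieDiff act (⇑c) := funext hDapp
  -- the key pointwise formula for `act a (f v)` coming from the cocycle identity
  have hcons : ∀ (v : Fin (i+1) → V) (k : Fin (i+1)),
      (Fin.cons a v : Fin (i+2) → V) ∘ (Fin.succ k).succAbove
        = Fin.cons a (v ∘ k.succAbove) := by
    intro v k
    funext t
    refine Fin.cases ?_ (fun u => ?_) t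
    · simp
    · simp [Fin.succ_succAbove_succ]
  have hfa : ∀ v : Fin (i+1) → V, act a (f v)
      = ∑ k : Fin (i+1), (-1:ℂ)^((k:ℕ)) • act (v k) (f (Fin.cons a (v ∘ k.succAbove))) := by
    intro v
    have h0 := congrFun hf (Fin.cons a v)
    unfold lieDiff at h0
    rw [Fin.sum_univ_succ] at h0
    have htail : (Fin.cons a v : Fin (i+2) → V) ∘ (0 : Fin (i+2)).succAbove = v := by
      funext t; simp [Fin.succAbove_zero]
    rw [htail] at h0
    simp only [Fin.cons_zero, Fin.val_zero, zero_add, pow_one, neg_smul, one_smul,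
      Pi.zero_apply] at h0
    have hterm : ∀ k : Fin (i+1),
        ((-1:ℂ)^(((Fin.succ k : Fin (i+2)):ℕ)+1)) •
          act ((Fin.cons a v : Fin (i+2) → V) (Fin.succ k))
            (f ((Fin.cons a v : Fin (i+2) → V) ∘ (Fin.succ k).succAbove))
        = (-1:ℂ)^((k:ℕ)) • act (v k) (f (Fin.cons a (v ∘ k.succAbove))) := by
      intro k
      rw [hcons v k, Fin.cons_succ, Fin.val_succ,
        show (k:ℕ)+1+1 = (k:ℕ)+2 from rfl, pow_add]
      norm_num
    rw [Finset.sum_congr rfl (fun k _ => hterm k)] at h0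
    exact neg_add_eq_zero.mp h0
  have hDva : ∀ v : Fin (i+1) → V, act a (D v)
      = ∑ k : Fin (i+1), (-1:ℂ)^((k:ℕ)) • act (v k) (f (Fin.cons a (v ∘ k.succAbove))) := by
    intro v
    rw [hDapp]
    unfold lieDiff
    rw [map_sum]
    refine Finset.sum_congr rfl fun k _ => ?_
    rw [map_smul, hcomm a (v k), hcw]
    simp [pow_succ]
  refine ⟨f - D, c, ?_, ?_, ?_⟩
  · have hsub : ⇑(f - D) = ⇑f - ⇑D := rfl
    rw [hsub, CE.lieDiff_sub, hf, hDcoe, CE.lieDiff_lieDiff act hcomm, sub_zero]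
  · intro v
    rw [LinearMap.mem_ker, AlternatingMap.sub_apply, map_sub, hfa v, hDva v, sub_self]
  · intro v
    rw [AlternatingMap.sub_apply, hDapp v]
    abel
end

section
/- Let n ≥ 2 and let h(2n) be the Lie algebra of polynomial Hamiltonian vector fields on ℂ^{2n}. The structure functions of h(2n) can only be of order 1; concretely: for every alternating bilinear map c : g_{−1} × g_{−1} → h(2n) satisfying the cocycle identity [A, c(B, C)] − [B, c(A, C)] + [C, c(A, B)] = 0 for all A, B, C ∈ g_{−1}, and such that every value c(A, B) is a vector field vanishing at the origin, there exists a linear map b : g_{−1} → h(2n), all of whose values are vector fields vanishing at the origin, such that c(A, B) = [A, b(B)] − [B, b(A)] for all A, B ∈ g_{−1}. -/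
open MvPolynomial

/-- The polynomial algebra `ℂ[x₁, …, xₙ, y₁, …, yₙ]` of functions on `ℂ²ⁿ`. -/
noncomputable abbrev PolyC2n (n : ℕ) := MvPolynomial (Fin n ⊕ Fin n) ℂ

/-- The Hamiltonian vector field `X_f : g ↦ {f, g}` of a polynomial `f`, as a linear map
into derivations of `ℂ[x, y]`.  Here `Sum.inl i` indexes `xᵢ` and `Sum.inr i` indexes `yᵢ`. -/
noncomputable def hamVF (n : ℕ) : PolyC2n n →ₗ[ℂ] Derivation ℂ (PolyC2n n) (PolyC2n n) where
  toFun f := ∑ i : Fin n,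
    (pderiv (Sum.inl i) f • pderiv (Sum.inr i) - pderiv (Sum.inr i) f • pderiv (Sum.inl i))
  map_add' f g := by
    simp only [map_add, add_smul]
    rw [← Finset.sum_add_distrib]
    exact Finset.sum_congr rfl fun i _ => by abel
  map_smul' r f := by
    simp only [Derivation.map_smul, RingHom.id_apply, Finset.smul_sum, smul_sub, smul_assoc]

/-- `h(2n)`: the Lie algebra of polynomial Hamiltonian vector fields on `ℂ²ⁿ`,
as a subspace of all derivations. -/
noncomputable def hamAlg (n : ℕ) :
    Submodule ℂ (Derivation ℂ (PolyC2n n) (PolyC2n n)) := LinearMap.range (hamVF n)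

/-- The constant-coefficient vector field `Σᵢ (uᵢ ∂/∂xᵢ + vᵢ ∂/∂yᵢ)` attached to
`(u, v) ∈ ℂⁿ × ℂⁿ ≅ ℂ²ⁿ`; these fields form the abelian subalgebra `g₋₁ ⊆ h(2n)`. -/
noncomputable def constVF (n : ℕ) (p : (Fin n → ℂ) × (Fin n → ℂ)) :
    Derivation ℂ (PolyC2n n) (PolyC2n n) :=
  ∑ i : Fin n, (p.1 i • pderiv (Sum.inl i) + p.2 i • pderiv (Sum.inr i))

/-- A polynomial vector field vanishes at the origin if all its coefficient polynomials
`D(xᵢ)`, `D(yᵢ)` have zero constant term. -/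
def VanishesAtOrigin {n : ℕ} (D : Derivation ℂ (PolyC2n n) (PolyC2n n)) : Prop :=
  ∀ s : Fin n ⊕ Fin n, constantCoeff (D (X s)) = 0

/-- total degree of an exponent multiset, as a Fintype sum -/
def dg {n : ℕ} (m : (Fin n ⊕ Fin n) →₀ ℕ) : ℕ := ∑ t, m t

lemma dg_sum {n : ℕ} (m : (Fin n ⊕ Fin n) →₀ ℕ) : (m.sum fun _ e => e) = dg m := by
  rw [dg, Finsupp.sum_fintype]; intro; rfl

lemma dg_sub_single {n : ℕ} (m : (Fin n ⊕ Fin n) →₀ ℕ) (u : Fin n ⊕ Fin n) (h : m u ≠ 0) :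
    dg (m - Finsupp.single u 1) + 1 = dg m := by
  have hle : Finsupp.single u 1 ≤ m :=
    Finsupp.single_le_iff.mpr (Nat.one_le_iff_ne_zero.mpr h)
  have hm : m - Finsupp.single u 1 + Finsupp.single u 1 = m := tsub_add_cancel_of_le hle
  have : dg (m - Finsupp.single u 1 + Finsupp.single u 1) =
      dg (m - Finsupp.single u 1) + dg (Finsupp.single u 1) := by
    simp [dg, Finset.sum_add_distrib]
  rw [hm] at this
  have h1 : dg (Finsupp.single u 1) = 1 := by
    simp [dg, Finsupp.single_apply]
  omega

noncomputable def Lop (n j : ℕ) : PolyC2n n →ₗ[ℂ] PolyC2n n :=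
  Finsupp.lsum ℂ (fun m => (((dg m + j : ℕ) : ℂ))⁻¹ • (monomial m)) ∘ₗ
    (AddMonoidAlgebra.coeffLinearEquiv ℂ).toLinearMap

theorem Lop_monomial {n : ℕ} (j : ℕ) (m : (Fin n ⊕ Fin n) →₀ ℕ) (a : ℂ) :
    Lop n j (monomial m a) = (((dg m + j : ℕ) : ℂ))⁻¹ • monomial m a := by
  simp [Lop]

theorem coeff_Lop {n : ℕ} (j : ℕ) (q : PolyC2n n) (m : (Fin n ⊕ Fin n) →₀ ℕ) :
    coeff m (Lop n j q) = (((dg m + j : ℕ) : ℂ))⁻¹ * coeff m q := by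
  induction q using MvPolynomial.induction_on' with
  | monomial m' a =>
    rw [Lop_monomial]
    by_cases h : m = m'
    · subst h; simp [coeff_monomial]
    · simp [coeff_monomial, Ne.symm h, h]
  | add p q hp hq => simp [map_add, hp, hq, mul_add]

theorem pderiv_Lop {n : ℕ} (j : ℕ) (u : Fin n ⊕ Fin n) (q : PolyC2n n) :
    pderiv u (Lop n j q) = Lop n (j+1) (pderiv u q) := by
  induction q using MvPolynomial.induction_on' with
  | monomial m a =>
    rw [Lop_monomial, Derivation.map_smul, pderiv_monomial, Lop_monomial]
    by_cases h : m u = 0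
    · simp [h]
    · have := dg_sub_single m u h
      have h2 : dg (m - Finsupp.single u 1) + (j + 1) = dg m + j := by omega
      rw [h2]
  | add p q hp hq => simp [map_add, hp, hq]

theorem X_mul_Lop {n : ℕ} (j : ℕ) (t : Fin n ⊕ Fin n) (q : PolyC2n n) :
    X t * Lop n (j+1) q = Lop n j (X t * q) := by
  induction q using MvPolynomial.induction_on' with
  | monomial m a =>
    rw [Lop_monomial, X, mul_smul_comm, monomial_mul, Lop_monomial, one_mul]
    congr 2
    have : dg (Finsupp.single t 1 + m) = dg m + 1 := by
      simp [dg, Finset.sum_add_distrib, Finsupp.single_apply, add_comm]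
    rw [this]
    ring_nf
  | add p q hp hq => simp [map_add, mul_add, hp, hq]

theorem Lop_euler {n : ℕ} (j : ℕ) (hj : j ≠ 0) (q : PolyC2n n) :
    Lop n j ((j : ℂ) • q + ∑ t, X t * pderiv t q) = q := by
  induction q using MvPolynomial.induction_on' with
  | monomial m a =>
    have heul : (∑ t, X t * pderiv t (monomial m a)) = (dg m : ℂ) • monomial m a := by
      rw [dg, Nat.cast_sum, Finset.sum_smul]
      refine Finset.sum_congr rfl fun t _ => ?_
      rw [pderiv_monomial, X, monomial_mul, one_mul]
      by_cases h : m t = 0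
      · simp [h]
      · have hm : Finsupp.single t 1 + (m - Finsupp.single t 1) = m := by
          rw [add_comm]
          exact tsub_add_cancel_of_le
            (Finsupp.single_le_iff.mpr (Nat.one_le_iff_ne_zero.mpr h))
        rw [hm, smul_monomial]
        rw [smul_eq_mul]
        ring
    rw [heul, ← add_smul, map_smul, Lop_monomial, smul_smul, mul_comm]
    have hne : ((dg m + j : ℕ) : ℂ) ≠ 0 := Nat.cast_ne_zero.mpr (by omega)
    have : ((j : ℂ) + (dg m : ℂ)) = ((dg m + j : ℕ) : ℂ) := by push_cast; ring
    rw [this, inv_mul_cancel₀ hne, one_smul]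
  | add p q hp hq =>
    have : (j:ℂ) • (p + q) + ∑ t, X t * pderiv t (p + q)
        = ((j:ℂ) • p + ∑ t, X t * pderiv t p) + ((j:ℂ) • q + ∑ t, X t * pderiv t q) := by
      simp [map_add, mul_add, Finset.sum_add_distrib]; ring
    rw [this, map_add, hp, hq]


/-- evaluation of a derivation at a fixed polynomial, as a linear map -/
noncomputable def evalAtL {n : ℕ} (p : PolyC2n n) :
    Derivation ℂ (PolyC2n n) (PolyC2n n) →ₗ[ℂ] PolyC2n n where
  toFun D := D p
  map_add' D E := Derivation.add_apply p
  map_smul' r D := Derivation.smul_apply (a := p) r D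

@[simp] lemma evalAtL_apply {n : ℕ} (p : PolyC2n n) (D : Derivation ℂ (PolyC2n n) (PolyC2n n)) :
    evalAtL p D = D p := rfl

lemma hamVF_X_inl {n : ℕ} (f : PolyC2n n) (i : Fin n) :
    hamVF n f (X (Sum.inl i)) = -(pderiv (Sum.inr i) f) := by
  show evalAtL (X (Sum.inl i)) (∑ j : Fin n, _) = _
  rw [map_sum]
  rw [Finset.sum_eq_single i]
  · simp [evalAtL, Derivation.sub_apply, Derivation.smul_apply, Pi.single_eq_same]
  · intro j _ hj
    simp [evalAtL, Derivation.sub_apply, Derivation.smul_apply, pderiv_X,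
      Pi.single_apply, Sum.inl.injEq, (Ne.symm hj)]
  · simp

lemma hamVF_X_inr {n : ℕ} (f : PolyC2n n) (i : Fin n) :
    hamVF n f (X (Sum.inr i)) = pderiv (Sum.inl i) f := by
  show evalAtL (X (Sum.inr i)) (∑ j : Fin n, _) = _
  rw [map_sum]
  rw [Finset.sum_eq_single i]
  · simp [evalAtL, Derivation.sub_apply, Derivation.smul_apply, Pi.single_eq_same]
  · intro j _ hj
    simp [evalAtL, Derivation.sub_apply, Derivation.smul_apply, pderiv_X,
      Pi.single_apply, Sum.inr.injEq, (Ne.symm hj)]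
  · simp

lemma pderiv_comm {n : ℕ} (u v : Fin n ⊕ Fin n) (q : PolyC2n n) :
    pderiv u (pderiv v q) = pderiv v (pderiv u q) := by
  rcases eq_or_ne u v with rfl | huv
  · rfl
  induction q using MvPolynomial.induction_on' with
  | monomial m a =>
    rw [pderiv_monomial, pderiv_monomial, pderiv_monomial, pderiv_monomial]
    have h1 : ∀ w w' : Fin n ⊕ Fin n, w ≠ w' →
        (m - Finsupp.single w' 1 : (Fin n ⊕ Fin n) →₀ ℕ) w = m w := by
      intro w w' h
      rw [Finsupp.tsub_apply, Finsupp.single_apply, if_neg (Ne.symm h), Nat.sub_zero]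
    rw [h1 u v huv, h1 v u (Ne.symm huv), tsub_tsub, tsub_tsub, add_comm]
    ring_nf
  | add p q hp hq => simp [map_add, hp, hq]

lemma constVF_apply {n : ℕ} (A : (Fin n → ℂ) × (Fin n → ℂ)) (q : PolyC2n n) :
    constVF n A q
      = ∑ i : Fin n, (A.1 i • pderiv (Sum.inl i) q + A.2 i • pderiv (Sum.inr i) q) := by
  show evalAtL q (∑ i : Fin n, _) = _
  rw [map_sum]
  refine Finset.sum_congr rfl fun i _ => ?_
  simp [evalAtL, Derivation.add_apply, Derivation.smul_apply]

lemma constVF_X {n : ℕ} (A : (Fin n → ℂ) × (Fin n → ℂ)) (s : Fin n ⊕ Fin n) :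
    constVF n A (X s) = C (Sum.elim A.1 A.2 s) := by
  rw [constVF_apply]
  cases s with
  | inl i =>
    rw [Finset.sum_eq_single i]
    · simp [pderiv_X, smul_eq_C_mul]
    · intro j _ hj
      simp [pderiv_X, Pi.single_apply, Sum.inl.injEq, Ne.symm hj]
    · simp
  | inr i =>
    rw [Finset.sum_eq_single i]
    · simp [pderiv_X, smul_eq_C_mul]
    · intro j _ hj
      simp [pderiv_X, Pi.single_apply, Sum.inr.injEq, Ne.symm hj]
    · simp

lemma pderiv_constVF {n : ℕ} (A : (Fin n → ℂ) × (Fin n → ℂ)) (v : Fin n ⊕ Fin n)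
    (q : PolyC2n n) : pderiv v (constVF n A q) = constVF n A (pderiv v q) := by
  rw [constVF_apply, constVF_apply, map_sum]
  refine Finset.sum_congr rfl fun i _ => ?_
  rw [map_add, Derivation.map_smul, Derivation.map_smul,
    pderiv_comm v (Sum.inl i), pderiv_comm v (Sum.inr i)]

lemma constVF_Lop {n j : ℕ} (A : (Fin n → ℂ) × (Fin n → ℂ)) (q : PolyC2n n) :
    constVF n A (Lop n j q) = Lop n (j+1) (constVF n A q) := by
  rw [constVF_apply, constVF_apply, map_sum]
  refine Finset.sum_congr rfl fun i _ => ?_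
  rw [pderiv_Lop, pderiv_Lop, map_add, map_smul, map_smul]

lemma bracket_constVF_apply_X {n : ℕ} (A : (Fin n → ℂ) × (Fin n → ℂ))
    (D : Derivation ℂ (PolyC2n n) (PolyC2n n)) (s : Fin n ⊕ Fin n) :
    ⁅constVF n A, D⁆ (X s) = constVF n A (D (X s)) := by
  rw [Derivation.commutator_apply, constVF_X, ← MvPolynomial.algebraMap_eq,
    Derivation.map_algebraMap, sub_zero]

/-- standard basis vectors of `ℂⁿ × ℂⁿ` indexed by `Fin n ⊕ Fin n` -/
noncomputable def bvec {n : ℕ} (t : Fin n ⊕ Fin n) : (Fin n → ℂ) × (Fin n → ℂ) :=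
  Sum.elim (fun i => (Pi.single i 1, 0)) (fun i => (0, Pi.single i 1)) t

lemma constVF_bvec {n : ℕ} (t : Fin n ⊕ Fin n) (q : PolyC2n n) :
    constVF n (bvec t) q = pderiv t q := by
  rw [constVF_apply]
  cases t with
  | inl i =>
    rw [Finset.sum_eq_single i]
    · simp [bvec, Pi.single_eq_same]
    · intro j _ hj
      simp [bvec, Pi.single_apply, Ne.symm hj]
    · simp
  | inr i =>
    rw [Finset.sum_eq_single i]
    · simp [bvec, Pi.single_eq_same]
    · intro j _ hj
      simp [bvec, Pi.single_apply, Ne.symm hj]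
    · simp

lemma single_smul_sum {n : ℕ} (f : Fin n → ℂ) :
    ∑ i : Fin n, f i • (Pi.single i 1 : Fin n → ℂ) = f := by
  have h : ∀ i : Fin n, f i • (Pi.single i 1 : Fin n → ℂ) = Pi.single i (f i) := by
    intro i
    rw [← Pi.single_smul, smul_eq_mul, mul_one]
  rw [Finset.sum_congr rfl fun i _ => h i, Finset.univ_sum_single]

lemma bvec_decomp {n : ℕ} (A : (Fin n → ℂ) × (Fin n → ℂ)) :
    ∑ t : Fin n ⊕ Fin n, Sum.elim A.1 A.2 t • bvec t = A := by
  rw [Fintype.sum_sum_type]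
  simp only [bvec, Sum.elim_inl, Sum.elim_inr, Prod.smul_mk, smul_zero]
  apply Prod.ext
  · rw [Prod.fst_add, Prod.fst_sum, Prod.fst_sum]
    simp [single_smul_sum]
  · rw [Prod.snd_add, Prod.snd_sum, Prod.snd_sum]
    simp [single_smul_sum]


/-- the "symplectically dual" coefficient family of a vector field `D` -/
noncomputable def Gc {n : ℕ} (D : Derivation ℂ (PolyC2n n) (PolyC2n n))
    (u : Fin n ⊕ Fin n) : PolyC2n n :=
  Sum.elim (fun i => D (X (Sum.inr i))) (fun i => -(D (X (Sum.inl i)))) u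

lemma Gc_add {n : ℕ} (D E : Derivation ℂ (PolyC2n n) (PolyC2n n)) (u : Fin n ⊕ Fin n) :
    Gc (D + E) u = Gc D u + Gc E u := by
  cases u <;> simp [Gc, Derivation.add_apply] <;> ring

lemma Gc_smul {n : ℕ} (r : ℂ) (D : Derivation ℂ (PolyC2n n) (PolyC2n n)) (u : Fin n ⊕ Fin n) :
    Gc (r • D) u = r • Gc D u := by
  cases u <;> simp [Gc, Derivation.smul_apply]

lemma Gc_hamVF {n : ℕ} (h : PolyC2n n) (u : Fin n ⊕ Fin n) :
    Gc (hamVF n h) u = pderiv u h := by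
  cases u with
  | inl i => simp [Gc, hamVF_X_inr]
  | inr i => simp [Gc, hamVF_X_inl]

/-- Koszul primitive: a canonical Hamiltonian potential for a Hamiltonian field -/
noncomputable def FpotL (n : ℕ) :
    Derivation ℂ (PolyC2n n) (PolyC2n n) →ₗ[ℂ] PolyC2n n where
  toFun D := ∑ u, X u * Lop n 1 (Gc D u)
  map_add' D E := by
    rw [← Finset.sum_add_distrib]
    refine Finset.sum_congr rfl fun u _ => ?_
    rw [Gc_add, map_add, mul_add]
  map_smul' r D := by
    show (∑ u, X u * Lop n 1 (Gc (r • D) u)) = _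
    rw [RingHom.id_apply, Finset.smul_sum]
    apply Finset.sum_congr rfl
    intro u _
    rw [Gc_smul, map_smul, mul_smul_comm]

lemma constantCoeff_FpotL {n : ℕ} (D : Derivation ℂ (PolyC2n n) (PolyC2n n)) :
    constantCoeff (FpotL n D) = 0 := by
  show constantCoeff (∑ u, X u * Lop n 1 (Gc D u)) = 0
  rw [map_sum]
  refine Finset.sum_eq_zero fun u _ => ?_
  rw [map_mul, constantCoeff_X, zero_mul]

lemma pderiv_FpotL_hamVF {n : ℕ} (h : PolyC2n n) (v : Fin n ⊕ Fin n) :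
    pderiv v (FpotL n (hamVF n h)) = pderiv v h := by
  show pderiv v (∑ u, X u * Lop n 1 (Gc (hamVF n h) u)) = pderiv v h
  have : ∀ u, Gc (hamVF n h) u = pderiv u h := Gc_hamVF h
  rw [Finset.sum_congr rfl fun u _ => by rw [this u]]
  rw [map_sum]
  have hterm : ∀ u, pderiv v (X u * Lop n 1 (pderiv u h))
      = (if u = v then Lop n 1 (pderiv v h) else 0) + Lop n 1 (X u * pderiv u (pderiv v h)) := by
    intro u
    rw [pderiv_mul, pderiv_Lop, pderiv_comm v u, ← X_mul_Lop]
    congr 1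
    classical
    rw [pderiv_X]
    by_cases huv : u = v
    · subst huv; simp
    · simp [Pi.single_apply, Ne.symm huv, huv]
  rw [Finset.sum_congr rfl fun u _ => hterm u, Finset.sum_add_distrib,
    Finset.sum_ite_eq' Finset.univ v (fun _ => Lop n 1 (pderiv v h))]
  simp only [Finset.mem_univ, if_true]
  rw [← map_sum]
  have := Lop_euler (n := n) 1 one_ne_zero (pderiv v h)
  rw [Nat.cast_one, one_smul] at this
  rw [← map_add, this]

lemma pderiv_FpotL {n : ℕ} (D : Derivation ℂ (PolyC2n n) (PolyC2n n))
    (hD : D ∈ hamAlg n) (v : Fin n ⊕ Fin n) :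
    pderiv v (FpotL n D) = Gc D v := by
  obtain ⟨h, rfl⟩ := hD
  rw [pderiv_FpotL_hamVF, Gc_hamVF]

lemma hamVF_FpotL {n : ℕ} (D : Derivation ℂ (PolyC2n n) (PolyC2n n))
    (hD : D ∈ hamAlg n) : hamVF n (FpotL n D) = D := by
  apply MvPolynomial.derivation_ext
  intro s
  cases s with
  | inl i =>
    rw [hamVF_X_inl, pderiv_FpotL D hD]
    simp [Gc]
  | inr i =>
    rw [hamVF_X_inr, pderiv_FpotL D hD]
    simp [Gc]

lemma ham_bracket {n : ℕ} (A : (Fin n → ℂ) × (Fin n → ℂ)) (g : PolyC2n n) :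
    ⁅constVF n A, hamVF n g⁆ = hamVF n (constVF n A g) := by
  apply MvPolynomial.derivation_ext
  intro s
  rw [bracket_constVF_apply_X]
  cases s with
  | inl i => rw [hamVF_X_inl, hamVF_X_inl, map_neg, pderiv_constVF]
  | inr i => rw [hamVF_X_inr, hamVF_X_inr, pderiv_constVF]

/-- a polynomial with vanishing constant term and all partials zero is zero -/
lemma eq_zero_of_pderiv_eq_zero {n : ℕ} (K : PolyC2n n)
    (h0 : constantCoeff K = 0) (hp : ∀ v, pderiv v K = 0) : K = 0 := by
  have hK : Lop n 1 K = K := by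
    have := Lop_euler (n := n) 1 one_ne_zero K
    rw [Nat.cast_one, one_smul] at this
    calc Lop n 1 K = Lop n 1 (K + ∑ t, X t * pderiv t K) := by
          rw [Finset.sum_congr rfl fun t _ => by rw [hp t, mul_zero], Finset.sum_const_zero,
            add_zero]
      _ = K := this
  ext m
  rcases eq_or_ne m 0 with rfl | hm
  · simpa [← constantCoeff_eq] using h0
  · obtain ⟨u, hu⟩ : ∃ u, m u ≠ 0 := by
      by_contra hc
      push_neg at hc
      exact hm (Finsupp.ext fun u => hc u)
    have hd : dg m ≠ 0 := by
      have hle : m u ≤ dg m := by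
        rw [dg]
        exact Finset.single_le_sum (fun t _ => Nat.zero_le (m t)) (Finset.mem_univ u)
      omega
    have hcoeff : coeff m K = ((dg m + 1 : ℕ) : ℂ)⁻¹ * coeff m K := by
      conv_lhs => rw [← hK, coeff_Lop]
    have hN : ((dg m + 1 : ℕ) : ℂ) ≠ 0 := Nat.cast_ne_zero.mpr (by omega)
    have h2 : ((dg m + 1 : ℕ) : ℂ) * coeff m K = coeff m K := by
      conv_lhs => rw [hcoeff]
      rw [← mul_assoc, mul_inv_cancel₀ hN, one_mul]
    have h3 : (((dg m + 1 : ℕ) : ℂ) - 1) * coeff m K = 0 := by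
      rw [sub_mul, one_mul, h2, sub_self]
    have h4 : ((dg m + 1 : ℕ) : ℂ) - 1 ≠ 0 := by
      have : ((dg m + 1 : ℕ) : ℂ) = (dg m : ℂ) + 1 := by push_cast; ring
      rw [this, add_sub_cancel_right]
      exact Nat.cast_ne_zero.mpr hd
    have := mul_eq_zero.mp h3
    simp only [coeff_zero]
    tauto

section Main

variable {n : ℕ}
  (c : ((Fin n → ℂ) × (Fin n → ℂ)) →ₗ[ℂ] ((Fin n → ℂ) × (Fin n → ℂ)) →ₗ[ℂ]
      Derivation ℂ (PolyC2n n) (PolyC2n n))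

lemma constantCoeff_constVF_FpotL (A : (Fin n → ℂ) × (Fin n → ℂ))
    (D : Derivation ℂ (PolyC2n n) (PolyC2n n)) (hD : D ∈ hamAlg n)
    (hv : VanishesAtOrigin D) :
    constantCoeff (constVF n A (FpotL n D)) = 0 := by
  rw [constVF_apply, map_sum]
  refine Finset.sum_eq_zero fun i _ => ?_
  rw [map_add, smul_eq_C_mul, smul_eq_C_mul, map_mul, map_mul,
    pderiv_FpotL D hD, pderiv_FpotL D hD]
  have h1 : constantCoeff (Gc D (Sum.inl i)) = 0 := by
    simpa [Gc] using hv (Sum.inr i)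
  have h2 : constantCoeff (Gc D (Sum.inr i)) = 0 := by
    simpa [Gc] using hv (Sum.inl i)
  rw [h1, h2, mul_zero, mul_zero, add_zero]

lemma K_zero
    (hval : ∀ A B, c A B ∈ hamAlg n ∧ VanishesAtOrigin (c A B))
    (hcocycle : ∀ A B C : (Fin n → ℂ) × (Fin n → ℂ),
      ⁅constVF n A, c B C⁆ - ⁅constVF n B, c A C⁆ + ⁅constVF n C, c A B⁆ = 0)
    (A B C : (Fin n → ℂ) × (Fin n → ℂ)) :
    constVF n A (FpotL n (c B C)) - constVF n B (FpotL n (c A C))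
      + constVF n C (FpotL n (c A B)) = 0 := by
  apply eq_zero_of_pderiv_eq_zero
  · rw [map_add, map_sub,
      constantCoeff_constVF_FpotL A _ (hval B C).1 (hval B C).2,
      constantCoeff_constVF_FpotL B _ (hval A C).1 (hval A C).2,
      constantCoeff_constVF_FpotL C _ (hval A B).1 (hval A B).2]
    ring
  · intro v
    rw [map_add, map_sub, pderiv_constVF, pderiv_constVF, pderiv_constVF,
      pderiv_FpotL _ (hval B C).1, pderiv_FpotL _ (hval A C).1, pderiv_FpotL _ (hval A B).1]
    have hc := congrArg (fun D : Derivation ℂ (PolyC2n n) (PolyC2n n)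
      => D (X (Sum.elim (fun i => Sum.inr i) (fun i => Sum.inl i) v))) (hcocycle A B C)
    simp only [Derivation.add_apply, Derivation.sub_apply, Derivation.zero_apply,
      bracket_constVF_apply_X] at hc
    cases v with
    | inl i =>
      simpa [Gc] using hc
    | inr i =>
      simp only [Gc, Sum.elim_inr, map_neg, Derivation.map_neg] at hc ⊢
      linear_combination -hc

end Main

section Main2

variable {n : ℕ}
  (c : ((Fin n → ℂ) × (Fin n → ℂ)) →ₗ[ℂ] ((Fin n → ℂ) × (Fin n → ℂ)) →ₗ[ℂ]
      Derivation ℂ (PolyC2n n) (PolyC2n n))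

/-- Koszul primitive of a 2-cocycle: potential of the primitive 1-cochain -/
noncomputable def phiF (B : (Fin n → ℂ) × (Fin n → ℂ)) : PolyC2n n :=
  ∑ t, X t * Lop n 2 (FpotL n (c (bvec t) B))

lemma phiF_add (B B' : (Fin n → ℂ) × (Fin n → ℂ)) :
    phiF c (B + B') = phiF c B + phiF c B' := by
  rw [phiF, phiF, phiF, ← Finset.sum_add_distrib]
  refine Finset.sum_congr rfl fun t _ => ?_
  rw [map_add, map_add, map_add, mul_add]

lemma phiF_smul (r : ℂ) (B : (Fin n → ℂ) × (Fin n → ℂ)) :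
    phiF c (r • B) = r • phiF c B := by
  rw [phiF, phiF, Finset.smul_sum]
  refine Finset.sum_congr rfl fun t _ => ?_
  rw [map_smul, map_smul, map_smul, mul_smul_comm]

lemma constVF_sum (A : (Fin n → ℂ) × (Fin n → ℂ)) {ι : Type*} (s : Finset ι)
    (f : ι → PolyC2n n) : constVF n A (∑ t ∈ s, f t) = ∑ t ∈ s, constVF n A (f t) :=
  map_sum (constVF n A).toLinearMap f s

lemma constVF_phiF (A B : (Fin n → ℂ) × (Fin n → ℂ)) :
    constVF n A (phiF c B)
      = Lop n 2 (FpotL n (c A B))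
        + ∑ t, X t * Lop n 3 (constVF n A (FpotL n (c (bvec t) B))) := by
  rw [phiF, constVF_sum]
  have hterm : ∀ t, constVF n A (X t * Lop n 2 (FpotL n (c (bvec t) B)))
      = Sum.elim A.1 A.2 t • Lop n 2 (FpotL n (c (bvec t) B))
        + X t * Lop n 3 (constVF n A (FpotL n (c (bvec t) B))) := by
    intro t
    rw [Derivation.leibniz, constVF_X, constVF_Lop, smul_eq_mul, smul_eq_mul,
      smul_eq_C_mul, mul_comm (Lop n 2 _)]
    ring
  rw [Finset.sum_congr rfl fun t _ => hterm t, Finset.sum_add_distrib]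
  congr 1
  have : ∀ t : Fin n ⊕ Fin n, Sum.elim A.1 A.2 t • Lop n 2 (FpotL n (c (bvec t) B))
      = Lop n 2 (FpotL n ((Sum.elim A.1 A.2 t • c (bvec t)) B)) := by
    intro t
    rw [LinearMap.smul_apply, map_smul, map_smul]
  rw [Finset.sum_congr rfl fun t _ => this t, ← map_sum, ← map_sum]
  have hsum : (∑ t : Fin n ⊕ Fin n, (Sum.elim A.1 A.2 t • c (bvec t)) B) = c A B := by
    have h2 : ∀ t : Fin n ⊕ Fin n,
        (Sum.elim A.1 A.2 t • c (bvec t)) B = (c (Sum.elim A.1 A.2 t • bvec t)) B := by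
      intro t
      rw [map_smul]
    rw [Finset.sum_congr rfl fun t _ => h2 t, ← LinearMap.sum_apply,
      ← map_sum c (fun t => Sum.elim A.1 A.2 t • bvec t) Finset.univ, bvec_decomp]
  rw [hsum]

end Main2

section Main3

variable {n : ℕ}
  (c : ((Fin n → ℂ) × (Fin n → ℂ)) →ₗ[ℂ] ((Fin n → ℂ) × (Fin n → ℂ)) →ₗ[ℂ]
      Derivation ℂ (PolyC2n n) (PolyC2n n))

lemma calt (halt : ∀ A, c A A = 0) (A B : (Fin n → ℂ) × (Fin n → ℂ)) :
    c B A = -(c A B) := by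
  have h := halt (A + B)
  simp only [map_add, LinearMap.add_apply, halt A, halt B, zero_add, add_zero] at h
  exact eq_neg_of_add_eq_zero_left h

lemma phi_key (halt : ∀ A, c A A = 0)
    (hval : ∀ A B, c A B ∈ hamAlg n ∧ VanishesAtOrigin (c A B))
    (hcocycle : ∀ A B C : (Fin n → ℂ) × (Fin n → ℂ),
      ⁅constVF n A, c B C⁆ - ⁅constVF n B, c A C⁆ + ⁅constVF n C, c A B⁆ = 0)
    (A B : (Fin n → ℂ) × (Fin n → ℂ)) :
    constVF n A (phiF c B) - constVF n B (phiF c A) = FpotL n (c A B) := by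
  rw [constVF_phiF, constVF_phiF]
  have hBA : c B A = -(c A B) := calt c halt A B
  have hinner : ∀ t : Fin n ⊕ Fin n,
      constVF n A (FpotL n (c (bvec t) B)) - constVF n B (FpotL n (c (bvec t) A))
        = pderiv t (FpotL n (c A B)) := by
    intro t
    have hK := K_zero c hval hcocycle A B (bvec t)
    have h1 : c (bvec t) B = -(c B (bvec t)) := calt c halt B (bvec t)
    have h2 : c (bvec t) A = -(c A (bvec t)) := calt c halt A (bvec t)
    have hnegA : constVF n A (FpotL n (-(c B (bvec t))))
        = -(constVF n A (FpotL n (c B (bvec t)))) := by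
      rw [map_neg, Derivation.map_neg]
    have hnegB : constVF n B (FpotL n (-(c A (bvec t))))
        = -(constVF n B (FpotL n (c A (bvec t)))) := by
      rw [map_neg, Derivation.map_neg]
    rw [h1, h2, hnegA, hnegB, ← constVF_bvec t (FpotL n (c A B))]
    linear_combination -hK
  calc Lop n 2 (FpotL n (c A B))
        + ∑ t, X t * Lop n 3 (constVF n A (FpotL n (c (bvec t) B)))
      - (Lop n 2 (FpotL n (c B A))
        + ∑ t, X t * Lop n 3 (constVF n B (FpotL n (c (bvec t) A))))
      = (2:ℂ) • Lop n 2 (FpotL n (c A B))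
        + ∑ t, X t * Lop n 3 (constVF n A (FpotL n (c (bvec t) B))
            - constVF n B (FpotL n (c (bvec t) A))) := by
        rw [hBA, map_neg, map_neg]
        have hsplit : (∑ t, X t * Lop n 3 (constVF n A (FpotL n (c (bvec t) B))
              - constVF n B (FpotL n (c (bvec t) A))))
            = (∑ t, X t * Lop n 3 (constVF n A (FpotL n (c (bvec t) B))))
              - ∑ t, X t * Lop n 3 (constVF n B (FpotL n (c (bvec t) A))) := by
          rw [← Finset.sum_sub_distrib]
          refine Finset.sum_congr rfl fun t _ => ?_
          rw [map_sub, mul_sub]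
        rw [hsplit, two_smul]
        ring
    _ = (2:ℂ) • Lop n 2 (FpotL n (c A B))
        + ∑ t, X t * Lop n 3 (pderiv t (FpotL n (c A B))) := by
        rw [Finset.sum_congr rfl fun t _ => by rw [hinner t]]
    _ = Lop n 2 ((2:ℂ) • FpotL n (c A B) + ∑ t, X t * pderiv t (FpotL n (c A B))) := by
        rw [map_add, map_smul]
        congr 1
        rw [map_sum]
        exact Finset.sum_congr rfl fun t _ => (X_mul_Lop 2 t _)
    _ = FpotL n (c A B) := by
        have := Lop_euler (n := n) 2 two_ne_zero (FpotL n (c A B))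
        rw [Nat.cast_ofNat] at this
        exact this

end Main3


section Main4

variable {n : ℕ}
  (c : ((Fin n → ℂ) × (Fin n → ℂ)) →ₗ[ℂ] ((Fin n → ℂ) × (Fin n → ℂ)) →ₗ[ℂ]
      Derivation ℂ (PolyC2n n) (PolyC2n n))

lemma constantCoeff_Lop (j : ℕ) (q : PolyC2n n) (hq : constantCoeff q = 0) :
    constantCoeff (Lop n j q) = 0 := by
  have h := coeff_Lop (n := n) j q 0
  rw [← constantCoeff_eq] at h
  simp only [h]
  rw [hq, mul_zero]

lemma constantCoeff_pderiv_phiF (B : (Fin n → ℂ) × (Fin n → ℂ)) (v : Fin n ⊕ Fin n) :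
    constantCoeff (pderiv v (phiF c B)) = 0 := by
  rw [phiF, map_sum, map_sum]
  refine Finset.sum_eq_zero fun t _ => ?_
  rw [pderiv_mul, map_add, map_mul, map_mul, constantCoeff_X,
    constantCoeff_Lop 2 _ (constantCoeff_FpotL _), mul_zero, zero_mul, add_zero]

theorem ham_cocycle_vanishing_at_origin_is_coboundary' (hn : 2 ≤ n)
    (halt : ∀ A, c A A = 0)
    (hval : ∀ A B, c A B ∈ hamAlg n ∧ VanishesAtOrigin (c A B))
    (hcocycle : ∀ A B C : (Fin n → ℂ) × (Fin n → ℂ),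
      ⁅constVF n A, c B C⁆ - ⁅constVF n B, c A C⁆ + ⁅constVF n C, c A B⁆ = 0) :
    ∃ b : ((Fin n → ℂ) × (Fin n → ℂ)) →ₗ[ℂ] Derivation ℂ (PolyC2n n) (PolyC2n n),
      (∀ A, b A ∈ hamAlg n ∧ VanishesAtOrigin (b A)) ∧
      ∀ A B, c A B = ⁅constVF n A, b B⁆ - ⁅constVF n B, b A⁆ := by
  refine ⟨{ toFun := fun B => hamVF n (phiF c B),
            map_add' := fun B B' => by rw [phiF_add, map_add],
            map_smul' := fun r B => by rw [phiF_smul, map_smul, RingHom.id_apply] },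
          fun A => ⟨⟨phiF c A, rfl⟩, ?_⟩, fun A B => ?_⟩
  · intro s
    show constantCoeff (hamVF n (phiF c A) (X s)) = 0
    cases s with
    | inl i => rw [hamVF_X_inl, map_neg, constantCoeff_pderiv_phiF, neg_zero]
    | inr i => rw [hamVF_X_inr, constantCoeff_pderiv_phiF]
  · show c A B = ⁅constVF n A, hamVF n (phiF c B)⁆ - ⁅constVF n B, hamVF n (phiF c A)⁆
    have h5 := phi_key c halt hval hcocycle A B
    calc c A B = hamVF n (FpotL n (c A B)) := (hamVF_FpotL _ (hval A B).1).symm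
      _ = hamVF n (constVF n A (phiF c B) - constVF n B (phiF c A)) := by rw [h5]
      _ = ⁅constVF n A, hamVF n (phiF c B)⁆ - ⁅constVF n B, hamVF n (phiF c A)⁆ := by
          rw [map_sub, ham_bracket, ham_bracket]


end Main4

/-- for `n ≥ 2`, the structure functions of `h(2n)` can only be of order 1:
every alternating bilinear 2-cocycle `c : g₋₁ × g₋₁ → h(2n)` all of whose values vanish at
the origin is the coboundary of a linear map `b : g₋₁ → h(2n)` whose values vanish at the
origin. -/
theorem ham_cocycle_vanishing_at_origin_is_coboundary (n : ℕ) (hn : 2 ≤ n)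
    (c : ((Fin n → ℂ) × (Fin n → ℂ)) →ₗ[ℂ] ((Fin n → ℂ) × (Fin n → ℂ)) →ₗ[ℂ]
      Derivation ℂ (PolyC2n n) (PolyC2n n))
    (halt : ∀ A, c A A = 0)
    (hval : ∀ A B, c A B ∈ hamAlg n ∧ VanishesAtOrigin (c A B))
    (hcocycle : ∀ A B C : (Fin n → ℂ) × (Fin n → ℂ),
      ⁅constVF n A, c B C⁆ - ⁅constVF n B, c A C⁆ + ⁅constVF n C, c A B⁆ = 0) :
    ∃ b : ((Fin n → ℂ) × (Fin n → ℂ)) →ₗ[ℂ] Derivation ℂ (PolyC2n n) (PolyC2n n),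
      (∀ A, b A ∈ hamAlg n ∧ VanishesAtOrigin (b A)) ∧
      ∀ A B, c A B = ⁅constVF n A, b B⁆ - ⁅constVF n B, b A⁆ := by
  exact ham_cocycle_vanishing_at_origin_is_coboundary' c hn halt hval hcocycle
end
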